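/- arXiv:1407.0836 — 2 statements merged into one kernel-verified Lean document; each statement's English description precedes it below -/
import Mathlib

section
/- Let ρ be a symmetric probability measure on ℝ which is not the Dirac mass at 0. Then for every nonzero real s, ∫ exp(s z - s^2 z^2 / 2) dρ(z) < 1. -/
/-! By the symmetry of `ρ`, the integrand may be replaced by its even part
`cosh (s z) * exp (-(s z) ^ 2 / 2)`. Comparing the series of `cosh x` and `exp (x ^ 2 / 2)` term by
term, via `2 ^ n * n ! ≤ (2 n)!`, bounds this even part by `1`, strictly away from `z = 0`.
Since `ρ ≠ δ₀` charges `{0}ᶜ`, the integral is strictly less than `1`. -/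

open MeasureTheory

namespace Real

lemma cosh_lt_exp_half_sq {x : ℝ} (hx : x ≠ 0) : cosh x < exp (x ^ 2 / 2) := by
  rw [cosh_eq_tsum, exp_eq_exp_ℝ, NormedSpace.exp_eq_tsum ℝ]
  refine Summable.tsum_lt_tsum_of_nonneg (i := 2) (fun n ↦ by rw [pow_mul]; positivity)
    (fun n ↦ ?_) ?_ (NormedSpace.expSeries_summable' (𝕂 := ℝ) (x ^ 2 / 2))
  · simp only [div_pow, pow_mul, smul_eq_mul, inv_mul_eq_div, div_div]
    gcongr
    exact_mod_cast Nat.two_pow_mul_factorial_le_factorial_two_mul _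
  · have : 0 < x ^ 4 := by positivity
    norm_num [Nat.factorial]
    linarith

lemma cosh_mul_exp_neg_half_sq_le_one (x : ℝ) : cosh x * exp (-(x ^ 2 / 2)) ≤ 1 := by
  rw [← le_div_iff₀ (exp_pos _), exp_neg, div_inv_eq_mul, one_mul]
  exact cosh_le_exp_half_sq x

lemma cosh_mul_exp_neg_half_sq_lt_one {x : ℝ} (hx : x ≠ 0) : cosh x * exp (-(x ^ 2 / 2)) < 1 := by
  rw [← lt_div_iff₀ (exp_pos _), exp_neg, div_inv_eq_mul, one_mul]
  exact cosh_lt_exp_half_sq hx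

lemma exp_sub_half_sq_le (x : ℝ) : exp (x - x ^ 2 / 2) ≤ exp (1 / 2) :=
  exp_le_exp.2 (by nlinarith [sq_nonneg (x - 1)])

lemma exp_sub_half_sq_add_exp_neg_sub_half_sq (x : ℝ) :
    (exp (x - x ^ 2 / 2) + exp (-x - (-x) ^ 2 / 2)) / 2 = cosh x * exp (-(x ^ 2 / 2)) := by
  rw [cosh_eq, neg_sq, sub_eq_add_neg, sub_eq_add_neg, exp_add, exp_add]
  ring

end Real

theorem integral_eq_integral_add_comp_neg_div_two {G : Type*} [MeasurableSpace G] [AddGroup G]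
    [MeasurableNeg G] {μ : Measure G} [μ.IsNegInvariant] {f : G → ℝ} (hf : Integrable f μ) :
    ∫ x, f x ∂μ = ∫ x, (f x + f (-x)) / 2 ∂μ := by
  rw [integral_div, integral_add hf hf.comp_neg, integral_neg_eq_self]
  ring

theorem measure_compl_singleton_ne_zero_of_ne_dirac {α : Type*} [MeasurableSpace α]
    [MeasurableSingletonClass α] {μ : Measure α} [IsProbabilityMeasure μ] {a : α}
    (hμ : μ ≠ Measure.dirac a) : μ {a}ᶜ ≠ 0 := by
  intro h
  have hae : ∀ᵐ x ∂μ, x ∈ ({a} : Finset α) := by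
    rw [ae_iff]
    simp only [Finset.mem_singleton]
    exact h
  have hμa : μ = μ {a} • Measure.dirac a := by simpa using Measure.ae_mem_finset_iff.1 hae
  rw [(prob_compl_eq_zero_iff (measurableSet_singleton a)).1 h, one_smul] at hμa
  exact hμ hμa

theorem integral_lt_of_ne_dirac {α : Type*} [MeasurableSpace α] [MeasurableSingletonClass α]
    {μ : Measure α} [IsProbabilityMeasure μ] {a : α} (hμ : μ ≠ Measure.dirac a) {g : α → ℝ}
    {c : ℝ} (hg : Integrable g μ) (hle : ∀ x, g x ≤ c) (hlt : ∀ x ≠ a, g x < c) :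
    ∫ x, g x ∂μ < c := by
  have hsupp : {a}ᶜ ⊆ Function.support fun x ↦ c - g x := fun x hx ↦
    (sub_pos.2 (hlt x hx)).ne'
  have hpos : 0 < ∫ x, (c - g x) ∂μ :=
    (integral_pos_iff_support_of_nonneg_ae (.of_forall fun x ↦ sub_nonneg.2 (hle x))
      ((integrable_const c).sub hg)).2
      (measure_pos_of_superset hsupp (measure_compl_singleton_ne_zero_of_ne_dirac hμ))
  rw [integral_sub (integrable_const c) hg, integral_const, probReal_univ, one_smul] at hpos
  linarith

open Real

theorem integral_exp_lt_one
    (ρ : Measure ℝ) [IsProbabilityMeasure ρ]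
    (hsym : ρ.map (fun z => -z) = ρ) (hρ : ρ ≠ Measure.dirac 0)
    (s : ℝ) (hs : s ≠ 0) :
    ∫ z, Real.exp (s * z - s ^ 2 * z ^ 2 / 2) ∂ρ < 1 := by
  have : ρ.IsNegInvariant := ⟨hsym⟩
  have hf : Integrable (fun z ↦ exp (s * z - (s * z) ^ 2 / 2)) ρ :=
    .of_bound (by fun_prop) (exp (1 / 2)) (.of_forall fun z ↦ by
      rw [norm_of_nonneg (exp_nonneg _)]; exact exp_sub_half_sq_le _)
  simp_rw [← mul_pow]
  rw [integral_eq_integral_add_comp_neg_div_two hf]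
  simp_rw [mul_neg, exp_sub_half_sq_add_exp_neg_sub_half_sq]
  refine integral_lt_of_ne_dirac hρ ?_ (fun z ↦ cosh_mul_exp_neg_half_sq_le_one _)
    (fun z hz ↦ cosh_mul_exp_neg_half_sq_lt_one (mul_ne_zero hs hz))
  exact .of_bound (by fun_prop) 1 (.of_forall fun z ↦ by
    rw [norm_of_nonneg (by positivity)]; exact cosh_mul_exp_neg_half_sq_le_one _)
end

section
/- Let ρ be a symmetric probability measure on ℝ which is not the Dirac mass at 0, and let μ be a probability measure on ℝ with finite first moment, μ ≠ ρ, ∫ z dμ(z) ≠ 0, finite second moment, and finite relative entropy H(μ|ρ). Then H(μ|ρ) > (∫ z dμ(z))² / (2 ∫ z² dμ(z)). -/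
open MeasureTheory Real InformationTheory

/-!
Write `g = dμ/dρ` and `klFun x = x log x + 1 - x`, so that `H(μ|ρ) = ∫ klFun ∘ g dρ`. Since `ρ`
is symmetric, `H(μ|ρ)` is also the `ρ`-average of `(klFun (g z) + klFun (g (-z))) / 2`.
Pointwise, `klFun a + klFun b ≥ (a - b)² / (2 (a + b)) ≥ x (a - b) - x² (a + b) / 2`, the first
inequality being strict for `a ≠ b`. Taking `a = g z`, `b = g (-z)`, `x = c z` and integrating
gives `H(μ|ρ) ≥ ∫ (c z - c² z² / 2) dμ`, which for `c = ∫ z dμ / ∫ z² dμ` is the claimed bound.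
It is strict because `g` cannot be even: an even density would give `μ` mean zero.
-/

theorem two_mul_lt_log_one_add_sub_log_one_sub {t : ℝ} (h0 : 0 < t) (h1 : t < 1) :
    2 * t < log (1 + t) - log (1 - t) := by
  have hs := hasSum_log_sub_log_of_abs_lt_one (x := t) (by rw [abs_lt]; constructor <;> linarith)
  have hle := sum_le_hasSum (Finset.range 2) (fun k _ => by positivity) hs
  norm_num [Finset.sum_range_succ] at hle
  nlinarith [pow_pos h0 3]

theorem sq_lt_klFun_one_add_add_klFun_one_sub {t : ℝ} (h0 : t ≠ 0) (h1 : |t| ≤ 1) :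
    t ^ 2 < klFun (1 + t) + klFun (1 - t) := by
  wlog ht : 0 < t generalizing t
  · have := this (neg_ne_zero.mpr h0) (by rwa [abs_neg])
      (neg_pos.mpr (lt_of_le_of_ne (not_lt.mp ht) h0))
    rwa [neg_sq, ← sub_eq_add_neg, sub_neg_eq_add, add_comm (klFun _)] at this
  set Φ : ℝ → ℝ := fun s => klFun (1 + s) + klFun (1 - s) - s ^ 2
  have hmono : StrictMonoOn Φ (Set.Icc 0 1) := by
    refine strictMonoOn_of_hasDerivWithinAt_pos (convex_Icc 0 1) (by fun_prop)
      (f' := fun s => log (1 + s) - log (1 - s) - 2 * s) (fun s hs => ?_) (fun s hs => ?_)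
    all_goals rw [interior_Icc] at hs
    · have hplus := (hasDerivAt_klFun (x := 1 + s) (by linarith [hs.1])).comp s
        ((hasDerivAt_id s).const_add 1)
      have hminus := (hasDerivAt_klFun (x := 1 - s) (by linarith [hs.2])).comp s
        ((hasDerivAt_id s).const_sub 1)
      have hΦ : HasDerivAt Φ (log (1 + s) - log (1 - s) - 2 * s) s :=
        ((hplus.add hminus).sub (hasDerivAt_pow 2 s)).congr_deriv (by norm_num; ring)
      exact hΦ.hasDerivWithinAt
    · linarith [two_mul_lt_log_one_add_sub_log_one_sub hs.1 hs.2]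
  have hΦ0 : Φ 0 = 0 := by simp [Φ, klFun_one]
  have := hmono ⟨le_rfl, zero_le_one⟩ ⟨ht.le, (abs_of_pos ht) ▸ h1⟩ ht
  rw [hΦ0] at this
  exact sub_pos.mp this

theorem klFun_mul (x y : ℝ) :
    klFun (x * y) = x * klFun y + y * klFun x + (1 - x) * (1 - y) := by
  rcases eq_or_ne x 0 with rfl | hx
  · simp [klFun]
  rcases eq_or_ne y 0 with rfl | hy
  · simp [klFun]
  simp only [klFun, log_mul hx hy]
  ring

theorem sq_sub_div_lt_klFun_add_klFun {a b : ℝ} (ha : 0 ≤ a) (hb : 0 ≤ b) (hab : a ≠ b) :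
    (a - b) ^ 2 / (2 * (a + b)) < klFun a + klFun b := by
  have hs : 0 < a + b := by contrapose! hab; linarith
  set F := (a + b) / 2
  set t := (a - b) / (a + b)
  have hF : 0 < F := by positivity
  have ht0 : t ≠ 0 := div_ne_zero (sub_ne_zero.mpr hab) hs.ne'
  have ht1 : |t| ≤ 1 := by
    rw [abs_div, abs_of_pos hs, div_le_one hs, abs_le]; constructor <;> linarith
  have hsplit : klFun a + klFun b = F * (klFun (1 + t) + klFun (1 - t)) + 2 * klFun F := by
    have ha' : a = F * (1 + t) := by simp only [F, t]; field_simp; ring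
    have hb' : b = F * (1 - t) := by simp only [F, t]; field_simp; ring
    rw [ha', hb', klFun_mul, klFun_mul]
    ring
  have hsq : (a - b) ^ 2 / (2 * (a + b)) = F * t ^ 2 := by
    simp only [F, t]; field_simp
  rw [hsplit, hsq]
  nlinarith [mul_lt_mul_of_pos_left (sq_lt_klFun_one_add_add_klFun_one_sub ht0 ht1) hF,
    klFun_nonneg hF.le]

theorem lt_klFun_add_klFun {a b : ℝ} (ha : 0 ≤ a) (hb : 0 ≤ b) (hab : a ≠ b) (x : ℝ) :
    x * (a - b) - x ^ 2 * (a + b) / 2 < klFun a + klFun b := by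
  have hs : 0 < a + b := by contrapose! hab; linarith
  have hamgm : x * (a - b) - x ^ 2 * (a + b) / 2 ≤ (a - b) ^ 2 / (2 * (a + b)) := by
    rw [le_div_iff₀ (by positivity)]
    nlinarith [sq_nonneg (a - b - x * (a + b))]
  exact hamgm.trans_lt (sq_sub_div_lt_klFun_add_klFun ha hb hab)

theorem le_klFun_add_klFun {a b : ℝ} (ha : 0 ≤ a) (hb : 0 ≤ b) (x : ℝ) :
    x * (a - b) - x ^ 2 * (a + b) / 2 ≤ klFun a + klFun b := by
  rcases eq_or_ne a b with rfl | hab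
  · nlinarith [klFun_nonneg ha, sq_nonneg x]
  · exact (lt_klFun_add_klFun ha hb hab x).le

theorem integral_lt_integral_of_ae_le_of_measure_setOfPred_lt_ne_zero {α : Type*}
    [MeasurableSpace α] {μ : Measure α} {f g : α → ℝ} (hf : Integrable f μ) (hg : Integrable g μ)
    (hle : f ≤ᵐ[μ] g) (hlt : μ {x | f x < g x} ≠ 0) :
    ∫ x, f x ∂μ < ∫ x, g x ∂μ := by
  rw [← sub_pos, ← integral_sub hg hf, integral_pos_iff_support_of_nonneg_ae
    (hle.mono fun x => sub_nonneg.mpr) (hg.sub hf)]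
  exact pos_iff_ne_zero.mpr (mt (measure_mono_null fun x hx => (sub_pos.mpr hx).ne') hlt)

theorem integral_add_comp_neg {G : Type*} [MeasurableSpace G] [AddGroup G] [MeasurableNeg G]
    {ρ : Measure G} [ρ.IsNegInvariant] {F : G → ℝ} (hF : Integrable F ρ) :
    ∫ z, (F z + F (-z)) ∂ρ = 2 * ∫ z, F z ∂ρ := by
  rw [integral_add hF hF.comp_neg, integral_neg_eq_self, two_mul]

theorem integral_mul_lt_integral_klFun {ρ : Measure ℝ} [ρ.IsNegInvariant] {g : ℝ → ℝ}
    (hg : ∀ z, 0 ≤ g z) (hg_even : ¬ g =ᵐ[ρ] fun z => g (-z)) (c : ℝ)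
    (hint : Integrable (fun z => g z * (c * z - c ^ 2 * z ^ 2 / 2)) ρ)
    (hK : Integrable (fun z => klFun (g z)) ρ) :
    ∫ z, g z * (c * z - c ^ 2 * z ^ 2 / 2) ∂ρ < ∫ z, klFun (g z) ∂ρ := by
  have hpair (z : ℝ) :
      g z * (c * z - c ^ 2 * z ^ 2 / 2) + g (-z) * (c * -z - c ^ 2 * (-z) ^ 2 / 2)
        = c * z * (g z - g (-z)) - (c * z) ^ 2 * (g z + g (-z)) / 2 := by ring
  have hpair_lt : ∫ z, (g z * (c * z - c ^ 2 * z ^ 2 / 2)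
        + g (-z) * (c * -z - c ^ 2 * (-z) ^ 2 / 2)) ∂ρ
      < ∫ z, (klFun (g z) + klFun (g (-z))) ∂ρ :=
    integral_lt_integral_of_ae_le_of_measure_setOfPred_lt_ne_zero
      (hint.add hint.comp_neg) (hK.add hK.comp_neg)
      (ae_of_all _ fun z => (hpair z).trans_le (le_klFun_add_klFun (hg z) (hg (-z)) _))
      (mt (measure_mono_null fun z hz => (hpair z).trans_lt
        (lt_klFun_add_klFun (hg z) (hg (-z)) hz _)) ((not_congr ae_iff).mp hg_even))
  rw [integral_add_comp_neg hint, integral_add_comp_neg hK] at hpair_lt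
  linarith

theorem integral_eq_zero_of_rnDeriv_ae_eq_comp_neg {μ ρ : Measure ℝ} [SigmaFinite μ]
    [SigmaFinite ρ] [ρ.IsNegInvariant] (hac : μ ≪ ρ)
    (h : (fun z => (μ.rnDeriv ρ z).toReal) =ᵐ[ρ] fun z => (μ.rnDeriv ρ (-z)).toReal) :
    ∫ z, z ∂μ = 0 := by
  set g : ℝ → ℝ := fun z => (μ.rnDeriv ρ z).toReal
  have hm : ∫ z, g z * z ∂ρ = ∫ z, z ∂μ := integral_rnDeriv_smul hac
  have : ∫ z, z ∂μ = -∫ z, z ∂μ := calc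
    ∫ z, z ∂μ = ∫ z, g z * z ∂ρ := hm.symm
    _ = ∫ z, g (-z) * z ∂ρ := integral_congr_ae (h.mul (ae_of_all _ fun _ => rfl))
    _ = ∫ z, g z * -z ∂ρ := by simpa using (integral_neg_eq_self (fun z => g (-z) * z) ρ).symm
    _ = -∫ z, z ∂μ := by simp only [mul_neg, integral_neg, hm]
  linarith

theorem integral_mul_sub_sq_mul_div_two {μ : Measure ℝ} (hm1 : Integrable (fun z => z) μ)
    (hm2 : Integrable (fun z => z ^ 2) μ) (c : ℝ) :
    ∫ z, (c * z - c ^ 2 * z ^ 2 / 2) ∂μ = c * ∫ z, z ∂μ - c ^ 2 * (∫ z, z ^ 2 ∂μ) / 2 := by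
  rw [integral_sub (hm1.const_mul c) ((hm2.const_mul (c ^ 2)).div_const 2), integral_div,
    integral_const_mul, integral_const_mul]

theorem integral_klFun_rnDeriv_eq_integral_mul_log {α : Type*} [MeasurableSpace α]
    {μ ν : Measure α} [IsProbabilityMeasure μ] [IsProbabilityMeasure ν] (hμν : μ ≪ ν)
    (h : Integrable (fun x => (μ.rnDeriv ν x).toReal * log (μ.rnDeriv ν x).toReal) ν) :
    ∫ x, klFun (μ.rnDeriv ν x).toReal ∂ν
      = ∫ x, (μ.rnDeriv ν x).toReal * log (μ.rnDeriv ν x).toReal ∂ν := by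
  rw [integral_klFun_rnDeriv hμν ((integrable_rnDeriv_mul_log_iff hμν).mp h),
    integral_rnDeriv_mul_log hμν]
  simp

theorem relative_entropy_gt_general
    (ρ μ : Measure ℝ) [IsProbabilityMeasure ρ] [IsProbabilityMeasure μ]
    (hsym : ρ.map (fun z => -z) = ρ)
    (hm1 : Integrable (fun z => z) μ)
    (hmean : ∫ z, z ∂μ ≠ 0)
    (hm2 : Integrable (fun z => z ^ 2) μ)
    (hac : μ ≪ ρ) (f : ℝ → ℝ)
    (hf : ∀ᵐ z ∂ρ, f z = (μ.rnDeriv ρ z).toReal)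
    (hH : Integrable (fun z => f z * Real.log (f z)) ρ) :
    ∫ z, f z * Real.log (f z) ∂ρ
      > (∫ z, z ∂μ) ^ 2 / (2 * ∫ z, z ^ 2 ∂μ) := by
  have : ρ.IsNegInvariant := ⟨hsym⟩
  set g : ℝ → ℝ := fun z => (μ.rnDeriv ρ z).toReal
  set m := ∫ z, z ∂μ
  set s := ∫ z, z ^ 2 ∂μ
  set c := m / s
  have hfg : f =ᵐ[ρ] g := hf
  have hgg : Integrable (fun z => g z * log (g z)) ρ := hH.congr (hfg.fun_comp fun x => x * log x)
  have hquad : Integrable (fun z => c * z - c ^ 2 * z ^ 2 / 2) μ :=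
    (hm1.const_mul c).sub ((hm2.const_mul (c ^ 2)).div_const 2)
  calc m ^ 2 / (2 * s) = ∫ z, (c * z - c ^ 2 * z ^ 2 / 2) ∂μ := by
        rw [integral_mul_sub_sq_mul_div_two hm1 hm2]
        rcases eq_or_ne s 0 with hs | hs
        · simp [c, hs] -- with `x / 0 = 0` both sides vanish
        · simp only [c]; field_simp; ring
    _ = ∫ z, g z * (c * z - c ^ 2 * z ^ 2 / 2) ∂ρ := (integral_rnDeriv_smul hac).symm
    _ < ∫ z, klFun (g z) ∂ρ :=
        integral_mul_lt_integral_klFun (fun _ => ENNReal.toReal_nonneg)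
          (mt (integral_eq_zero_of_rnDeriv_ae_eq_comp_neg hac) hmean) c
          ((integrable_rnDeriv_smul_iff hac).mpr hquad)
          ((integrable_klFun_rnDeriv_iff hac).mpr ((integrable_rnDeriv_mul_log_iff hac).mp hgg))
    _ = ∫ z, f z * log (f z) ∂ρ := (integral_klFun_rnDeriv_eq_integral_mul_log hac hgg).trans
        (integral_congr_ae (hfg.fun_comp fun x => x * log x).symm)

theorem relative_entropy_gt
    (ρ μ : Measure ℝ) [IsProbabilityMeasure ρ] [IsProbabilityMeasure μ]
    (hsym : ρ.map (fun z => -z) = ρ) (hρ : ρ ≠ Measure.dirac 0)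
    (hm1 : Integrable (fun z => z) μ) (hμρ : μ ≠ ρ)
    (hmean : ∫ z, z ∂μ ≠ 0)
    (hm2 : Integrable (fun z => z ^ 2) μ)
    (hac : μ ≪ ρ) (f : ℝ → ℝ)
    (hf : ∀ᵐ z ∂ρ, f z = (μ.rnDeriv ρ z).toReal)
    (hH : Integrable (fun z => f z * Real.log (f z)) ρ) :
    ∫ z, f z * Real.log (f z) ∂ρ
      > (∫ z, z ∂μ) ^ 2 / (2 * ∫ z, z ^ 2 ∂μ) :=
  relative_entropy_gt_general ρ μ hsym hm1 hmean hm2 hac f hf hH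
end
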